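/- Let m = 5 and A = F_2[X_0, …, X_4]/(X_0^2 − 1, …, X_4^2 − 1). For l ∈ {0, …, 4} set Ẽ_l = ∏_{k ≠ l} (x_k − 1). Let c = Σ_{i=0}^{4} τ_i·(Ẽ_i + 1̂) with τ_i ∈ F_2, let f ∈ A satisfy w(f) ≤ 7, and set v = c + f. Then for every j ∈ {0, …, 4}: τ_j = 0 if and only if w(v·(x_j − 1)) < 16. -/

import Mathlib

/-!
Since `x_j ^ 2 = 1` and `2 = 0` in `A`, `(x_j - 1) ^ 2 = 0`; so multiplication by `x_j - 1` kills
every `b(η)` with `j ∈ η` and sends `Ẽ_j` to `1̂`, whence `c (x_j - 1) = τ_j 1̂`. Multiplication by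
`x_j` only permutes coefficients, so `f (x_j - 1) = f x_j - f` has weight at most `2 w(f) ≤ 14`.
Hence `v (x_j - 1)` is either this light word (`τ_j = 0`) or its complement, of weight at least
`32 - 14` (`τ_j = 1`). Coefficient vectors are unique because `A` maps to the group algebra of
`F_2^5` with `x_0^{k_0} ⋯ x_4^{k_4} ↦ k`.
-/

open MvPolynomial

/-- The weighted degree: total degree of `F(Y_0^{w_0}, …, Y_{m-1}^{w_{m-1}})`. -/
noncomputable def wdeg {F : Type*} [CommSemiring F] {m : ℕ} (w : Fin m → ℕ)
    (f : MvPolynomial (Fin m) F) : ℕ :=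
  ((MvPolynomial.bind₁ (fun l : Fin m => (MvPolynomial.X l : MvPolynomial (Fin m) F) ^ (w l))) f).totalDegree

/-- The weighted Reed–Muller code `WRMC_ω(m,q)` as a subspace of `F^{q^m}`. -/
noncomputable def WRMC (F : Type*) [CommSemiring F] [Fintype F] (m : ℕ) (w : Fin m → ℕ) (ω : ℕ) :
    Submodule F ((Fin m → F) → F) :=
  Submodule.span F
    {v | ∃ f : MvPolynomial (Fin m) F, wdeg w f ≤ ω ∧ v = fun P => MvPolynomial.eval P f}

/-- The generalized Reed–Muller code `C_ω(m,q)`. -/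
noncomputable def GRM (F : Type*) [CommSemiring F] [Fintype F] (m ω : ℕ) :
    Submodule F ((Fin m → F) → F) :=
  Submodule.span F
    {v | ∃ f : MvPolynomial (Fin m) F, f.totalDegree ≤ ω ∧ v = fun P => MvPolynomial.eval P f}

/-- The homogeneous Reed–Muller code `HRMC_d(m,q)`. -/
noncomputable def HRMC (F : Type*) [CommSemiring F] [Fintype F] (m d : ℕ) :
    Submodule F ((Fin m → F) → F) :=
  Submodule.span F
    {v | ∃ f : MvPolynomial (Fin m) F, f.IsHomogeneous d ∧ v = fun P => MvPolynomial.eval P f}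

/-- The ideal `(X_0^p - 1, …, X_{m-1}^p - 1)`. -/
noncomputable def Aideal (p m : ℕ) : Ideal (MvPolynomial (Fin m) (ZMod p)) :=
  Ideal.span (Set.range fun l : Fin m => (MvPolynomial.X l : MvPolynomial (Fin m) (ZMod p)) ^ p - 1)

/-- The modular algebra `A = F_p[X_0,…,X_{m-1}]/(X_0^p-1,…,X_{m-1}^p-1)`. -/
abbrev ModA (p m : ℕ) : Type := MvPolynomial (Fin m) (ZMod p) ⧸ Aideal p m

/-- `x_l`, the image of `X_l` in `A`. -/
noncomputable def xA (p m : ℕ) (l : Fin m) : ModA p m :=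
  Ideal.Quotient.mk (Aideal p m) (MvPolynomial.X l)

/-- The identification `ψ : F_p^{p^m} → A` sending `(c_j)` to `Σ_j c_j x_0^{j_0} ⋯ x_{m-1}^{j_{m-1}}`. -/
noncomputable def psi (p m : ℕ) [NeZero p] : ((Fin m → ZMod p) → ZMod p) →ₗ[ZMod p] ModA p m where
  toFun c := ∑ j : Fin m → ZMod p, c j • ∏ l, (xA p m l) ^ (j l).val
  map_add' a b := by simp [add_smul, Finset.sum_add_distrib]
  map_smul' r a := by simp [Finset.smul_sum, smul_smul]

/-- `b(η) = ∏_{l ∈ η} (x_l - 1)` in the binary algebra `A`. -/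
noncomputable def bElt (m : ℕ) (η : Finset (Fin m)) : ModA 2 m :=
  ∏ l ∈ η, (xA 2 m l - 1)

section Monomials

variable {p m : ℕ}

theorem xA_pow_self (l : Fin m) : xA p m l ^ p = 1 := by
  rw [xA, ← map_pow, ← map_one (Ideal.Quotient.mk (Aideal p m))]
  exact Ideal.Quotient.eq.2 (Ideal.subset_span ⟨l, rfl⟩)

noncomputable def xMonomial (p m : ℕ) (k : Fin m → ZMod p) : ModA p m :=
  ∏ l, xA p m l ^ (k l).val

theorem xMonomial_single (j : Fin m) : xMonomial p m (Pi.single j 1) = xA p m j := by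
  rw [xMonomial, Finset.prod_eq_single j (fun l _ hl => by simp [hl]) (by simp),
    Pi.single_eq_same, ZMod.val_one_eq_one_mod, ← pow_eq_pow_mod _ (xA_pow_self j), pow_one]

variable [NeZero p]

theorem xMonomial_mul (a b : Fin m → ZMod p) :
    xMonomial p m a * xMonomial p m b = xMonomial p m (a + b) := by
  simp only [xMonomial, ← Finset.prod_mul_distrib, Pi.add_apply, ZMod.val_add,
    ← pow_eq_pow_mod _ (xA_pow_self _), pow_add]

theorem psi_eq_sum_xMonomial (cv : (Fin m → ZMod p) → ZMod p) :
    psi p m cv = ∑ k, cv k • xMonomial p m k := rfl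

theorem psi_mul_xMonomial (cv : (Fin m → ZMod p) → ZMod p) (e : Fin m → ZMod p) :
    psi p m cv * xMonomial p m e = psi p m (fun k => cv (k - e)) := by
  rw [psi_eq_sum_xMonomial, psi_eq_sum_xMonomial, Finset.sum_mul]
  refine Fintype.sum_equiv (Equiv.addRight e) _ _ fun k => ?_
  simp [smul_mul_assoc, xMonomial_mul]

theorem psi_mul_xA_sub_one (cv : (Fin m → ZMod p) → ZMod p) (j : Fin m) :
    psi p m cv * (xA p m j - 1) = psi p m (fun k => cv (k - Pi.single j 1) - cv k) := by
  rw [mul_sub, mul_one, ← xMonomial_single, psi_mul_xMonomial, ← map_sub]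
  rfl

end Monomials

section GroupAlgebra

variable (p m : ℕ)

theorem Aideal_le_ker_aeval_single :
    Aideal p m ≤ RingHom.ker (MvPolynomial.aeval (R := ZMod p)
      fun l : Fin m => (AddMonoidAlgebra.single (Pi.single l 1) 1 :
        AddMonoidAlgebra (ZMod p) (Fin m → ZMod p))) := by
  rw [Aideal, Ideal.span_le]
  rintro _ ⟨l, rfl⟩
  have hp : (p : Fin m → ZMod p) = 0 := funext fun _ => ZMod.natCast_self p
  simp [AddMonoidAlgebra.single_pow, hp, ← AddMonoidAlgebra.one_def]

noncomputable def toAddMonoidAlgebra :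
    ModA p m →ₐ[ZMod p] AddMonoidAlgebra (ZMod p) (Fin m → ZMod p) :=
  Ideal.Quotient.liftₐ (Aideal p m) _ fun _ ha => Aideal_le_ker_aeval_single p m ha

variable {p m}

theorem toAddMonoidAlgebra_xA (l : Fin m) :
    toAddMonoidAlgebra p m (xA p m l) = AddMonoidAlgebra.single (Pi.single l 1) 1 :=
  MvPolynomial.aeval_X _ l

variable [NeZero p]

theorem toAddMonoidAlgebra_xMonomial (k : Fin m → ZMod p) :
    toAddMonoidAlgebra p m (xMonomial p m k) = AddMonoidAlgebra.single k 1 := by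
  have hk : ∑ l, (k l).val • (Pi.single l 1 : Fin m → ZMod p) = k := by
    simp [← Pi.single_smul, Finset.univ_sum_single]
  simp only [xMonomial, map_prod, map_pow, toAddMonoidAlgebra_xA, AddMonoidAlgebra.single_pow,
    one_pow, AddMonoidAlgebra.prod_single, Finset.prod_const_one, hk]

theorem coeff_toAddMonoidAlgebra_psi (cv : (Fin m → ZMod p) → ZMod p) (k : Fin m → ZMod p) :
    (toAddMonoidAlgebra p m (psi p m cv)).coeff k = cv k := by
  simp [psi_eq_sum_xMonomial, toAddMonoidAlgebra_xMonomial, AddMonoidAlgebra.coeff_single,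
    Finsupp.single_apply]

theorem psi_injective : Function.Injective (psi p m) := fun a b hab =>
  funext fun k => by
    rw [← coeff_toAddMonoidAlgebra_psi a k, hab, coeff_toAddMonoidAlgebra_psi]

end GroupAlgebra

section Hamming

variable {ι : Type*} [Fintype ι]

theorem hammingNorm_comp_equiv {β : Type*} [Zero β] [DecidableEq β] (x : ι → β) (σ : ι ≃ ι) :
    hammingNorm (x ∘ σ) = hammingNorm x :=
  Finset.card_equiv σ (by simp)

theorem hammingNorm_sub_le {β : Type*} [AddGroup β] [DecidableEq β] (x y : ι → β) :
    hammingNorm (x - y) ≤ hammingNorm x + hammingNorm y := by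
  have hdist : hammingNorm (x - y) = hammingDist x y := by
    simp only [hammingNorm, hammingDist, Pi.sub_apply, ne_eq, sub_eq_zero]
  rw [hdist, ← hammingDist_zero_right, ← hammingDist_zero_left]
  exact hammingDist_triangle x 0 y

theorem hammingNorm_one_add_add_hammingNorm (g : ι → ZMod 2) :
    hammingNorm (fun i => 1 + g i) + hammingNorm g = Fintype.card ι := by
  have hflip : ∀ u : ZMod 2, 1 + u ≠ 0 ↔ ¬u ≠ 0 := by decide
  simp only [hammingNorm, hflip]
  rw [add_comm]
  exact Finset.card_filter_add_card_filter_not _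

theorem hammingNorm_const_add_lt_iff (τ : ZMod 2) (g : ι → ZMod 2) {t : ℕ}
    (hg : hammingNorm g < t) (hcompl : t + hammingNorm g ≤ Fintype.card ι) :
    hammingNorm (fun i => τ + g i) < t ↔ τ = 0 := by
  have hcard := hammingNorm_one_add_add_hammingNorm g
  obtain rfl | rfl : τ = 0 ∨ τ = 1 := by revert τ; decide
  · simpa using hg
  · simp only [one_ne_zero, iff_false, not_lt]
    omega

end Hamming

section Binary

variable {m : ℕ}

theorem ModA.two_eq_zero : (2 : ModA 2 m) = 0 := by
  rw [← map_ofNat (algebraMap (ZMod 2) (ModA 2 m)) 2, show (2 : ZMod 2) = 0 by decide, map_zero]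

theorem ModA.sub_one_eq_sum_pow_val (x : ModA 2 m) : x - 1 = ∑ z : ZMod 2, x ^ z.val := by
  rw [show (Finset.univ : Finset (ZMod 2)) = {0, 1} by decide, Finset.sum_pair (by decide),
    ZMod.val_zero, ZMod.val_one, pow_zero, pow_one]
  linear_combination -ModA.two_eq_zero

theorem xA_sub_one_mul_self (j : Fin m) : (xA 2 m j - 1) * (xA 2 m j - 1) = 0 := by
  linear_combination xA_pow_self j + (1 - xA 2 m j) * ModA.two_eq_zero

theorem bElt_mul_xA_sub_one_of_mem {s : Finset (Fin m)} {j : Fin m} (hj : j ∈ s) :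
    bElt m s * (xA 2 m j - 1) = 0 := by
  rw [bElt, ← Finset.mul_prod_erase s _ hj, mul_right_comm, xA_sub_one_mul_self, zero_mul]

theorem bElt_compl_singleton_mul_xA_sub_one (j : Fin m) :
    bElt m {j}ᶜ * (xA 2 m j - 1) = bElt m Finset.univ := by
  rw [bElt, bElt, mul_comm, Finset.compl_singleton]
  exact Finset.mul_prod_erase _ (fun l => xA 2 m l - 1) (Finset.mem_univ j)

theorem bElt_univ_eq_psi : bElt m Finset.univ = psi 2 m 1 := by
  simp only [bElt, ModA.sub_one_eq_sum_pow_val, Finset.prod_univ_sum, Fintype.piFinset_univ,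
    psi_eq_sum_xMonomial, xMonomial, Pi.one_apply, one_smul]

theorem sum_smul_bElt_mul_xA_sub_one (τ : Fin m → ZMod 2) (j : Fin m) :
    (∑ i, τ i • (bElt m {i}ᶜ + bElt m Finset.univ)) * (xA 2 m j - 1) =
      τ j • bElt m Finset.univ := by
  have hkill : bElt m Finset.univ * (xA 2 m j - 1) = 0 :=
    bElt_mul_xA_sub_one_of_mem (Finset.mem_univ j)
  rw [Finset.sum_mul, Finset.sum_eq_single j]
  · rw [smul_mul_assoc, add_mul, bElt_compl_singleton_mul_xA_sub_one, hkill, add_zero]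
  · intro i _ hij
    rw [smul_mul_assoc, add_mul, hkill, add_zero,
      bElt_mul_xA_sub_one_of_mem (by simpa using hij.symm), smul_zero]
  · simp

end Binary

/-- decoding `HRMC_1(5,2)`: with `Ẽ_l = ∏_{k ≠ l}(x_k - 1) = b({l}ᶜ)`,
`c = Σ_i τ_i (Ẽ_i + 1̂)`, `w(f) ≤ 7` and `v = c + f`, for every `j` one has
`τ_j = 0` iff `w(v·(x_j - 1)) < 16` (weights measured via coefficient vectors under `ψ`). -/
theorem decoding_example (τ : Fin 5 → ZMod 2) (c f v : ModA 2 5)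
    (hc : c = ∑ i : Fin 5, τ i • (bElt 5 ({i}ᶜ) + bElt 5 Finset.univ))
    (cf : (Fin 5 → ZMod 2) → ZMod 2) (hcf : psi 2 5 cf = f)
    (hwf : hammingNorm cf ≤ 7)
    (hv : v = c + f) :
    ∀ j : Fin 5,
      (τ j = 0 ↔ ∀ cv : (Fin 5 → ZMod 2) → ZMod 2,
        psi 2 5 cv = v * (xA 2 5 j - 1) → hammingNorm cv < 16) := by
  intro j
  set g : (Fin 5 → ZMod 2) → ZMod 2 := fun k => cf (k - Pi.single j 1) - cf k
  have hg : hammingNorm g ≤ 14 :=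
    calc hammingNorm g ≤ hammingNorm (cf ∘ Equiv.subRight (Pi.single j 1)) + hammingNorm cf :=
          hammingNorm_sub_le _ _
      _ ≤ 14 := by rw [hammingNorm_comp_equiv]; omega
  have hsyndrome : v * (xA 2 5 j - 1) = psi 2 5 (fun k => τ j + g k) := by
    rw [hv, add_mul, hc, sum_smul_bElt_mul_xA_sub_one, ← hcf, psi_mul_xA_sub_one,
      bElt_univ_eq_psi, ← map_smul, ← map_add]
    congr 1
    funext k
    simp [g]
  have hcard : Fintype.card (Fin 5 → ZMod 2) = 32 := rfl
  rw [← hammingNorm_const_add_lt_iff (τ j) g (t := 16) (by omega) (by omega)]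
  exact ⟨fun hlt cv hcv => psi_injective (hcv.trans hsyndrome) ▸ hlt,
    fun hall => hall _ hsyndrome.symm⟩
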